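/- Let γ ∈ (0,1) and let f : ℝ^d×ℝ^d → ℝ be a C^1 function such that f and ∇_v f belong to L^1(ℝ^{2d}). Then Λ_v^γ f ∈ L^1(ℝ^{2d}) with ‖Λ_v^γ f‖_{L^1(ℝ^{2d})} ≤ C ‖f‖_{L^1(ℝ^{2d})}^{1−γ} ‖∇_v f‖_{L^1(ℝ^{2d})}^{γ}, where C depends only on d and γ. The analogous estimate holds with Λ_x^γ and ∇_x f in place of Λ_v^γ and ∇_v f. -/

import Mathlib

noncomputable section

open MeasureTheory Real

abbrev Ed (d : ℕ) : Type := EuclideanSpace ℝ (Fin d)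

/-- The fractional Laplacian in the `v` variable (up to the standard normalizing
constant `c_{d,γ}`), defined by the singular integral
`Λ_v^γ f(x,v) = ∫ (f(x,v) − f(x,v−b))/|b|^{d+γ} db`. -/
def LamV (d : ℕ) (γ : ℝ) (f : Ed d × Ed d → ℝ) (p : Ed d × Ed d) : ℝ :=
  ∫ b : Ed d, (f p - f (p.1, p.2 - b)) / ‖b‖ ^ ((d : ℝ) + γ)

/-- The fractional Laplacian in the `x` variable (up to the standard normalizing
constant). -/
def LamX (d : ℕ) (γ : ℝ) (f : Ed d × Ed d → ℝ) (p : Ed d × Ed d) : ℝ :=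
  ∫ b : Ed d, (f p - f (p.1 - b, p.2)) / ‖b‖ ^ ((d : ℝ) + γ)

open Set Metric intervalIntegral
open scoped ENNReal NNReal

lemma Ed.nontrivial {d : ℕ} (hd : 1 ≤ d) : Nontrivial (Ed d) := by
  haveI : Inhabited (Fin d) := ⟨⟨0, hd⟩⟩
  exact Module.nontrivial_of_finrank_pos (R := ℝ) (by rw [finrank_euclideanSpace_fin]; omega)

lemma lintegral_polar {d : ℕ} (hd : 1 ≤ d) (g : ℝ → ℝ≥0∞) (hg : Measurable g) :
    ∫⁻ x : Ed d, g ‖x‖ =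
      (volume : Measure (Ed d)).toSphere univ *
        ∫⁻ r in Ioi (0:ℝ), ENNReal.ofReal (r ^ (d - 1)) * g r := by
  haveI := Ed.nontrivial hd
  have hdim : Module.finrank ℝ (Ed d) = d := finrank_euclideanSpace_fin
  have hmeas : Measurable fun z : sphere (0 : Ed d) 1 × Ioi (0:ℝ) => g z.2.1 :=
    (hg.comp measurable_subtype_coe).comp measurable_snd
  have step1 : ∫⁻ x : Ed d, g ‖x‖ = ∫⁻ x in ({0}ᶜ : Set (Ed d)), g ‖x‖ := by
    rw [← lintegral_add_compl (fun x : Ed d => g ‖x‖) (measurableSet_singleton 0),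
      setLIntegral_measure_zero _ _ (measure_singleton 0), zero_add]
  have step2 : ∫⁻ x in ({0}ᶜ : Set (Ed d)), g ‖x‖
      = ∫⁻ x : ({0}ᶜ : Set (Ed d)), g ‖x.1‖ ∂(volume.comap Subtype.val) :=
    (lintegral_subtype_comap (measurableSet_singleton _).compl _).symm
  have step3 : ∫⁻ x : ({0}ᶜ : Set (Ed d)), g ‖x.1‖ ∂(volume.comap Subtype.val)
      = ∫⁻ z : sphere (0 : Ed d) 1 × Ioi (0:ℝ), g z.2.1
          ∂((volume : Measure (Ed d)).toSphere.prod
            (.volumeIoiPow (Module.finrank ℝ (Ed d) - 1))) := by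
    rw [← (Measure.measurePreserving_homeomorphUnitSphereProd
      (volume : Measure (Ed d))).lintegral_comp hmeas]
    refine lintegral_congr fun x => ?_
    simp
  have step4 : ∫⁻ z : sphere (0 : Ed d) 1 × Ioi (0:ℝ), g z.2.1
          ∂((volume : Measure (Ed d)).toSphere.prod
            (.volumeIoiPow (Module.finrank ℝ (Ed d) - 1)))
      = (volume : Measure (Ed d)).toSphere univ *
          ∫⁻ r : Ioi (0:ℝ), g r.1 ∂(Measure.volumeIoiPow (Module.finrank ℝ (Ed d) - 1)) := by
    rw [lintegral_prod _ hmeas.aemeasurable]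
    simp [lintegral_const, mul_comm]
  have step5 : ∫⁻ r : Ioi (0:ℝ), g r.1 ∂(Measure.volumeIoiPow (Module.finrank ℝ (Ed d) - 1))
      = ∫⁻ r in Ioi (0:ℝ), ENNReal.ofReal (r ^ (d - 1)) * g r := by
    have hd1 : Measurable fun r : ℝ => ENNReal.ofReal (r ^ (Module.finrank ℝ (Ed d) - 1)) :=
      (measurable_id.pow_const _).ennreal_ofReal
    have key := lintegral_withDensity_eq_lintegral_mul
      (Measure.comap Subtype.val volume : Measure (Ioi (0:ℝ)))
      (f := fun r : Ioi (0:ℝ) => ENNReal.ofReal (r.1 ^ (Module.finrank ℝ (Ed d) - 1)))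
      (g := fun r : Ioi (0:ℝ) => g r.1)
      (hd1.comp measurable_subtype_coe) (hg.comp measurable_subtype_coe)
    rw [Measure.volumeIoiPow, key]
    simp only [Pi.mul_apply, hdim]
    exact lintegral_subtype_comap measurableSet_Ioi (fun r => ENNReal.ofReal (r ^ (d-1)) * g r)
  rw [step1, step2, step3, step4, step5]

lemma lint_Ioc {γ R : ℝ} (hγ : 0 < γ) (hγ1 : γ < 1) (hR : 0 < R) :
    ∫⁻ r in Ioc (0:ℝ) R, ENNReal.ofReal (r ^ (-γ)) = ENNReal.ofReal (R ^ (1-γ) / (1-γ)) := by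
  have hint : IntegrableOn (fun r : ℝ => r ^ (-γ)) (Ioc 0 R) :=
    (intervalIntegrable_rpow' (by linarith : (-1:ℝ) < -γ) (a := 0) (b := R)).1
  rw [← ofReal_integral_eq_lintegral_ofReal hint ?pos]
  case pos =>
    filter_upwards [ae_restrict_mem measurableSet_Ioc] with r hr
    exact Real.rpow_nonneg hr.1.le _
  congr 1
  rw [← intervalIntegral.integral_of_le hR.le, integral_rpow (Or.inl (by linarith))]
  rw [Real.zero_rpow (by linarith : -γ + 1 ≠ 0)]
  rw [show -γ + 1 = 1 - γ by ring]
  ring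

lemma lint_Ioi {γ R : ℝ} (hγ : 0 < γ) (hR : 0 < R) :
    ∫⁻ r in Ioi R, ENNReal.ofReal (r ^ (-1-γ)) = ENNReal.ofReal (R ^ (-γ) / γ) := by
  have hint : IntegrableOn (fun r : ℝ => r ^ (-1-γ)) (Ioi R) :=
    integrableOn_Ioi_rpow_of_lt (by linarith) hR
  rw [← ofReal_integral_eq_lintegral_ofReal hint ?pos]
  case pos =>
    filter_upwards [ae_restrict_mem measurableSet_Ioi] with r hr
    exact Real.rpow_nonneg (hR.trans hr).le _
  congr 1
  rw [integral_Ioi_rpow_of_lt (by linarith) hR, show -1-γ+1 = -γ by ring]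
  field_simp

def Dv (f : Ed d × Ed d → ℝ) (p : Ed d × Ed d) : Ed d →L[ℝ] ℝ :=
  fderiv ℝ (fun v => f (p.1, v)) p.2

lemma hasFDerivAt_slice {f : Ed d × Ed d → ℝ} (hf : ContDiff ℝ 1 f) (p1 v : Ed d) :
    HasFDerivAt (fun w => f (p1, w)) (Dv f (p1, v)) v := by
  have h1 : DifferentiableAt ℝ (fun w : Ed d => f (p1, w)) v :=
    ((hf.differentiable one_ne_zero) (p1, v)).comp v
      ((differentiableAt_const p1).prodMk differentiableAt_id)
  exact h1.hasFDerivAt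

lemma Dv_eq {f : Ed d × Ed d → ℝ} (hf : ContDiff ℝ 1 f) (p : Ed d × Ed d) :
    Dv f p = (fderiv ℝ f p).comp (ContinuousLinearMap.inr ℝ (Ed d) (Ed d)) := by
  have h := ((hf.differentiable one_ne_zero) p).hasFDerivAt
  have h2 := h.comp p.2 (hasFDerivAt_prodMk_right (𝕜 := ℝ) p.1 p.2)
  exact h2.fderiv

lemma continuous_Dv {f : Ed d × Ed d → ℝ} (hf : ContDiff ℝ 1 f) : Continuous (Dv f) := by
  have : Dv f = fun p => (fderiv ℝ f p).comp (ContinuousLinearMap.inr ℝ (Ed d) (Ed d)) :=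
    funext (Dv_eq hf)
  rw [this]
  exact (hf.continuous_fderiv one_ne_zero).clm_comp continuous_const

lemma mvt_bound {f : Ed d × Ed d → ℝ} (hf : ContDiff ℝ 1 f) (b : Ed d) (p : Ed d × Ed d) :
    (‖f p - f (p.1, p.2 - b)‖₊ : ℝ≥0∞) ≤
      ∫⁻ t in Ioc (0:ℝ) 1, (‖Dv f (p.1, p.2 + (t • b - b))‖₊ : ℝ≥0∞) * ‖b‖₊ := by
  set ψ : ℝ → Ed d := fun t => p.2 + (t • b - b) with hψdef
  have hψ : ∀ t : ℝ, HasDerivAt ψ b t := by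
    intro t
    have := (((hasDerivAt_id t).smul_const b).sub_const b).const_add p.2
    simpa [hψdef] using this
  have hφ : ∀ t : ℝ, HasDerivAt (fun s => f (p.1, ψ s)) (Dv f (p.1, ψ t) b) t := fun t =>
    (hasFDerivAt_slice hf p.1 (ψ t)).comp_hasDerivAt t (hψ t)
  have hcont : Continuous fun t => Dv f (p.1, ψ t) b := by
    have h1 : Continuous ψ := by fun_prop
    exact ((continuous_Dv hf).comp (continuous_const.prodMk h1)).clm_apply continuous_const
  have key : f p - f (p.1, p.2 - b) = ∫ t in (0:ℝ)..1, Dv f (p.1, ψ t) b := by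
    rw [intervalIntegral.integral_eq_sub_of_hasDerivAt (fun t _ => hφ t)
      (hcont.intervalIntegrable 0 1)]
    have e1 : ψ 1 = p.2 := by simp [hψdef]
    have e0 : ψ 0 = p.2 - b := by simp [hψdef]; abel
    rw [e1, e0]
  calc (‖f p - f (p.1, p.2 - b)‖₊ : ℝ≥0∞)
      = ‖∫ t in Ioc (0:ℝ) 1, Dv f (p.1, ψ t) b‖₊ := by
        rw [key, intervalIntegral.integral_of_le zero_le_one]
    _ ≤ ∫⁻ t in Ioc (0:ℝ) 1, (‖Dv f (p.1, ψ t) b‖₊ : ℝ≥0∞) :=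
        enorm_integral_le_lintegral_enorm _
    _ ≤ ∫⁻ t in Ioc (0:ℝ) 1, (‖Dv f (p.1, ψ t)‖₊ : ℝ≥0∞) * ‖b‖₊ := by
        refine lintegral_mono fun t => ?_
        rw [← ENNReal.coe_mul]
        exact ENNReal.coe_le_coe.2 (ContinuousLinearMap.le_opNNNorm _ _)

lemma translation_lint (v : Ed d) (g : Ed d × Ed d → ℝ≥0∞) (hg : Measurable g) :
    ∫⁻ p : Ed d × Ed d, g (p.1, p.2 + v) = ∫⁻ p, g p := by
  have hmp : MeasurePreserving (fun p : Ed d × Ed d => (p.1, p.2 + v)) volume volume := by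
    rw [Measure.volume_eq_prod]
    exact (MeasurePreserving.id volume).prod (measurePreserving_add_right volume v)
  exact hmp.lintegral_comp hg

lemma diff_lint_le_deriv {f : Ed d × Ed d → ℝ} (hf : ContDiff ℝ 1 f) (b : Ed d) :
    ∫⁻ p : Ed d × Ed d, (‖f p - f (p.1, p.2 - b)‖₊ : ℝ≥0∞) ≤
      (‖b‖₊ : ℝ≥0∞) * ∫⁻ p, (‖Dv f p‖₊ : ℝ≥0∞) := by
  have hDm : Measurable fun p : Ed d × Ed d => (‖Dv f p‖₊ : ℝ≥0∞) :=
    (continuous_Dv hf).measurable.nnnorm.coe_nnreal_ennreal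
  have hprodc : Continuous fun q : (Ed d × Ed d) × ℝ => Dv f (q.1.1, q.1.2 + (q.2 • b - b)) := by
    refine (continuous_Dv hf).comp ?_
    fun_prop
  calc ∫⁻ p : Ed d × Ed d, (‖f p - f (p.1, p.2 - b)‖₊ : ℝ≥0∞)
      ≤ ∫⁻ p : Ed d × Ed d, ∫⁻ t in Ioc (0:ℝ) 1,
          (‖Dv f (p.1, p.2 + (t • b - b))‖₊ : ℝ≥0∞) * ‖b‖₊ :=
        lintegral_mono (mvt_bound hf b)
    _ = ∫⁻ t in Ioc (0:ℝ) 1, ∫⁻ p : Ed d × Ed d,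
          (‖Dv f (p.1, p.2 + (t • b - b))‖₊ : ℝ≥0∞) * ‖b‖₊ := by
        refine lintegral_lintegral_swap ?_
        exact (hprodc.measurable.nnnorm.coe_nnreal_ennreal.mul measurable_const).aemeasurable
    _ = ∫⁻ _t in Ioc (0:ℝ) 1, (∫⁻ p, (‖Dv f p‖₊ : ℝ≥0∞)) * ‖b‖₊ := by
        refine lintegral_congr fun t => ?_
        rw [lintegral_mul_const' _ _ (by simp : (‖b‖₊ : ℝ≥0∞) ≠ ⊤)]
        congr 1
        exact translation_lint (t • b - b) _ hDm
    _ = (‖b‖₊ : ℝ≥0∞) * ∫⁻ p, (‖Dv f p‖₊ : ℝ≥0∞) := by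
        rw [setLIntegral_const, Real.volume_Ioc]
        simp [mul_comm]

lemma diff_lint_le_self {f : Ed d × Ed d → ℝ} (hf : ContDiff ℝ 1 f) (b : Ed d) :
    ∫⁻ p : Ed d × Ed d, (‖f p - f (p.1, p.2 - b)‖₊ : ℝ≥0∞) ≤
      2 * ∫⁻ p, (‖f p‖₊ : ℝ≥0∞) := by
  have hfm : Measurable fun p : Ed d × Ed d => (‖f p‖₊ : ℝ≥0∞) :=
    hf.continuous.measurable.nnnorm.coe_nnreal_ennreal
  calc ∫⁻ p : Ed d × Ed d, (‖f p - f (p.1, p.2 - b)‖₊ : ℝ≥0∞)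
      ≤ ∫⁻ p : Ed d × Ed d, ((‖f p‖₊ : ℝ≥0∞) + ‖f (p.1, p.2 - b)‖₊) := by
        refine lintegral_mono fun p => ?_
        rw [← ENNReal.coe_add]
        exact ENNReal.coe_le_coe.2 (nnnorm_sub_le _ _)
    _ = (∫⁻ p, (‖f p‖₊ : ℝ≥0∞)) + ∫⁻ p : Ed d × Ed d, (‖f (p.1, p.2 - b)‖₊ : ℝ≥0∞) :=
        lintegral_add_left hfm _
    _ = 2 * ∫⁻ p, (‖f p‖₊ : ℝ≥0∞) := by
        have : ∫⁻ p : Ed d × Ed d, (‖f (p.1, p.2 - b)‖₊ : ℝ≥0∞) = ∫⁻ p, (‖f p‖₊ : ℝ≥0∞) := by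
          simp_rw [sub_eq_add_neg]
          exact translation_lint (-b) _ hfm
        rw [this, two_mul]

lemma coreV {d : ℕ} (hd : 1 ≤ d) {γ : ℝ} (hγ0 : 0 < γ) (hγ1 : γ < 1)
    {f : Ed d × Ed d → ℝ} (hf : ContDiff ℝ 1 f) (hfi : Integrable f)
    (hDi : Integrable (Dv f))
    (hN0 : 0 < ∫ p, ‖f p‖) (hN1 : 0 < ∫ p, ‖Dv f p‖) :
    ∫⁻ b : Ed d, ∫⁻ p : Ed d × Ed d, (‖(f p - f (p.1, p.2 - b)) / ‖b‖ ^ ((d:ℝ) + γ)‖₊ : ℝ≥0∞) ≤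
      ENNReal.ofReal ((((volume : Measure (Ed d)).toSphere univ).toReal * (1/(1-γ) + 2/γ)) *
        (∫ p, ‖f p‖) ^ (1-γ) * (∫ p, ‖Dv f p‖) ^ γ) := by
  haveI := Ed.nontrivial hd
  set N0 : ℝ := ∫ p, ‖f p‖ with hN0def
  set N1 : ℝ := ∫ p, ‖Dv f p‖ with hN1def
  set N0e : ℝ≥0∞ := ENNReal.ofReal N0
  set N1e : ℝ≥0∞ := ENNReal.ofReal N1
  have hL0 : ∫⁻ p : Ed d × Ed d, (‖f p‖₊ : ℝ≥0∞) = N0e :=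
    (ofReal_integral_norm_eq_lintegral_enorm hfi).symm
  have hL1 : ∫⁻ p : Ed d × Ed d, (‖Dv f p‖₊ : ℝ≥0∞) = N1e :=
    (ofReal_integral_norm_eq_lintegral_enorm hDi).symm
  set S : ℝ≥0∞ := (volume : Measure (Ed d)).toSphere univ with hSdef
  have hSfin : S ≠ ⊤ := measure_ne_top _ _
  set R : ℝ := N0 / N1 with hRdef
  have hR : 0 < R := div_pos hN0 hN1
  -- the radial majorant
  set h : ℝ → ℝ≥0∞ := fun r =>
    (ENNReal.ofReal (r ^ ((d:ℝ) + γ)))⁻¹ * min (2 * N0e) (ENNReal.ofReal r * N1e) with hhdef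
  have hhm : Measurable h := by
    apply Measurable.mul
    · exact ((Real.continuous_rpow_const (by positivity)).measurable.ennreal_ofReal).inv
    · exact (measurable_const.min (measurable_id.ennreal_ofReal.mul_const _))
  -- step 1 : pointwise (in b) bound by h ‖b‖
  have step1 : ∀ b : Ed d, b ≠ 0 →
      (∫⁻ p : Ed d × Ed d, (‖(f p - f (p.1, p.2 - b)) / ‖b‖ ^ ((d:ℝ) + γ)‖₊ : ℝ≥0∞)) ≤ h ‖b‖ := by
    intro b hb
    have hbp : (0:ℝ) < ‖b‖ ^ ((d:ℝ) + γ) := rpow_pos_of_pos (norm_pos_iff.2 hb) _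
    have heq : ∀ x : ℝ, (‖x / ‖b‖ ^ ((d:ℝ) + γ)‖₊ : ℝ≥0∞)
        = (ENNReal.ofReal (‖b‖ ^ ((d:ℝ) + γ)))⁻¹ * (‖x‖₊ : ℝ≥0∞) := by
      intro x
      rw [← enorm_eq_nnnorm, ← enorm_eq_nnnorm, ← ofReal_norm_eq_enorm, ← ofReal_norm_eq_enorm, Real.norm_eq_abs,
        Real.norm_eq_abs, abs_div, abs_of_pos hbp, ENNReal.ofReal_div_of_pos hbp,
        ENNReal.div_eq_inv_mul]
    calc ∫⁻ p : Ed d × Ed d, (‖(f p - f (p.1, p.2 - b)) / ‖b‖ ^ ((d:ℝ) + γ)‖₊ : ℝ≥0∞)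
        = (ENNReal.ofReal (‖b‖ ^ ((d:ℝ) + γ)))⁻¹ *
            ∫⁻ p : Ed d × Ed d, (‖f p - f (p.1, p.2 - b)‖₊ : ℝ≥0∞) := by
          simp_rw [heq]
          exact lintegral_const_mul' _ _
            (ENNReal.inv_ne_top.2 (ENNReal.ofReal_pos.2 hbp).ne')
      _ ≤ h ‖b‖ := by
          rw [hhdef]
          refine mul_le_mul_right (le_min ?_ ?_) _
          · exact (diff_lint_le_self hf b).trans (by rw [hL0])
          · refine (diff_lint_le_deriv hf b).trans ?_
            rw [hL1, ofReal_norm_eq_enorm, enorm_eq_nnnorm]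
  -- step 2 : integrate in b and pass to polar coordinates
  have step2 : ∫⁻ b : Ed d,
      ∫⁻ p : Ed d × Ed d, (‖(f p - f (p.1, p.2 - b)) / ‖b‖ ^ ((d:ℝ) + γ)‖₊ : ℝ≥0∞)
      ≤ S * ∫⁻ r in Ioi (0:ℝ), ENNReal.ofReal (r ^ (d - 1)) * h r := by
    rw [← lintegral_polar hd h hhm]
    refine lintegral_mono_ae ?_
    have h0 : (volume : Measure (Ed d)) {0} = 0 := measure_singleton 0
    filter_upwards [measure_eq_zero_iff_ae_notMem.1 h0] with b hb
    exact step1 b hb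
  -- power arithmetic helper
  have hcast : ((d - 1 : ℕ) : ℝ) = (d : ℝ) - 1 := by
    rw [Nat.cast_sub hd, Nat.cast_one]
  have hrpow1 : ∀ r : ℝ, 0 < r →
      r ^ (d - 1 : ℕ) * (r ^ (-((d:ℝ) + γ)) * (r * N1)) = N1 * r ^ (-γ) := by
    intro r hr0
    rw [← Real.rpow_natCast r (d - 1), hcast]
    calc r ^ ((d:ℝ) - 1) * (r ^ (-((d:ℝ) + γ)) * (r * N1))
        = r ^ ((d:ℝ) - 1) * r ^ (-((d:ℝ) + γ)) * r ^ (1:ℝ) * N1 := by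
          rw [Real.rpow_one]; ring
      _ = r ^ (((d:ℝ) - 1) + (-((d:ℝ) + γ)) + 1) * N1 := by
          rw [← Real.rpow_add hr0, ← Real.rpow_add hr0]
      _ = N1 * r ^ (-γ) := by
          rw [show ((d:ℝ) - 1) + (-((d:ℝ) + γ)) + 1 = -γ by ring]; ring
  have hrpow2 : ∀ r : ℝ, 0 < r →
      r ^ (d - 1 : ℕ) * r ^ (-((d:ℝ) + γ)) = r ^ (-1 - γ) := by
    intro r hr0
    rw [← Real.rpow_natCast r (d - 1), hcast, ← Real.rpow_add hr0,
      show ((d:ℝ) - 1) + (-((d:ℝ) + γ)) = -1 - γ by ring]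
  -- step 3 : estimate the radial integral
  have key3 : ∫⁻ r in Ioi (0:ℝ), ENNReal.ofReal (r ^ (d - 1)) * h r ≤
      N1e * ENNReal.ofReal (R ^ (1-γ) / (1-γ)) + 2 * N0e * ENNReal.ofReal (R ^ (-γ) / γ) := by
    have hsplit : Ioi (0:ℝ) = Ioc 0 R ∪ Ioi R := (Ioc_union_Ioi_eq_Ioi hR.le).symm
    rw [hsplit, lintegral_union measurableSet_Ioi (Ioc_disjoint_Ioi le_rfl)]
    have hbound1 : ∫⁻ r in Ioc (0:ℝ) R, ENNReal.ofReal (r ^ (d - 1)) * h r ≤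
        N1e * ENNReal.ofReal (R ^ (1-γ) / (1-γ)) := by
      have hae : ∀ᵐ r ∂(volume.restrict (Ioc (0:ℝ) R)),
          ENNReal.ofReal (r ^ (d - 1)) * h r ≤ N1e * ENNReal.ofReal (r ^ (-γ)) := by
        filter_upwards [ae_restrict_mem measurableSet_Ioc] with r hr
        have hr0 : (0:ℝ) < r := hr.1
        rw [hhdef]
        calc ENNReal.ofReal (r ^ (d - 1)) *
              ((ENNReal.ofReal (r ^ ((d:ℝ) + γ)))⁻¹ * min (2 * N0e) (ENNReal.ofReal r * N1e))
            ≤ ENNReal.ofReal (r ^ (d - 1)) *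
              ((ENNReal.ofReal (r ^ ((d:ℝ) + γ)))⁻¹ * (ENNReal.ofReal r * N1e)) :=
              mul_le_mul_right (mul_le_mul_right (min_le_right _ _) _) _
          _ = N1e * ENNReal.ofReal (r ^ (-γ)) := by
              rw [← ENNReal.ofReal_inv_of_pos (rpow_pos_of_pos hr0 _),
                ← Real.rpow_neg hr0.le, ← ENNReal.ofReal_mul (by positivity),
                ← ENNReal.ofReal_mul (by positivity),
                ← ENNReal.ofReal_mul (by positivity), hrpow1 r hr0,
                ENNReal.ofReal_mul hN1.le]
      calc ∫⁻ r in Ioc (0:ℝ) R, ENNReal.ofReal (r ^ (d - 1)) * h r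
          ≤ ∫⁻ r in Ioc (0:ℝ) R, N1e * ENNReal.ofReal (r ^ (-γ)) := lintegral_mono_ae hae
        _ = N1e * ENNReal.ofReal (R ^ (1-γ) / (1-γ)) := by
            rw [lintegral_const_mul' _ _ ENNReal.ofReal_ne_top, lint_Ioc hγ0 hγ1 hR]
    have hbound2 : ∫⁻ r in Ioi R, ENNReal.ofReal (r ^ (d - 1)) * h r ≤
        2 * N0e * ENNReal.ofReal (R ^ (-γ) / γ) := by
      have hae : ∀ᵐ r ∂(volume.restrict (Ioi R)),
          ENNReal.ofReal (r ^ (d - 1)) * h r ≤ 2 * N0e * ENNReal.ofReal (r ^ (-1-γ)) := by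
        filter_upwards [ae_restrict_mem measurableSet_Ioi] with r hr
        have hr0 : (0:ℝ) < r := hR.trans hr
        rw [hhdef]
        calc ENNReal.ofReal (r ^ (d - 1)) *
              ((ENNReal.ofReal (r ^ ((d:ℝ) + γ)))⁻¹ * min (2 * N0e) (ENNReal.ofReal r * N1e))
            ≤ ENNReal.ofReal (r ^ (d - 1)) *
              ((ENNReal.ofReal (r ^ ((d:ℝ) + γ)))⁻¹ * (2 * N0e)) :=
              mul_le_mul_right (mul_le_mul_right (min_le_left _ _) _) _
          _ = 2 * N0e * ENNReal.ofReal (r ^ (-1-γ)) := by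
              rw [← ENNReal.ofReal_inv_of_pos (rpow_pos_of_pos hr0 _),
                ← Real.rpow_neg hr0.le, ← mul_assoc,
                ← ENNReal.ofReal_mul (by positivity), hrpow2 r hr0, mul_comm]
      calc ∫⁻ r in Ioi R, ENNReal.ofReal (r ^ (d - 1)) * h r
          ≤ ∫⁻ r in Ioi R, 2 * N0e * ENNReal.ofReal (r ^ (-1-γ)) := lintegral_mono_ae hae
        _ = 2 * N0e * ENNReal.ofReal (R ^ (-γ) / γ) := by
            rw [lintegral_const_mul' _ _ (by finiteness), lint_Ioi hγ0 hR]
    exact add_le_add hbound1 hbound2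
  -- step 4 : final arithmetic
  have hA : N1 * R ^ (1-γ) = N0 ^ (1-γ) * N1 ^ γ := by
    rw [hRdef, Real.div_rpow hN0.le hN1.le, div_eq_mul_inv, ← Real.rpow_neg hN1.le]
    rw [show N1 * (N0 ^ (1-γ) * N1 ^ (-(1-γ))) =
      N0 ^ (1-γ) * (N1 ^ (1:ℝ) * N1 ^ (-(1-γ))) by rw [Real.rpow_one]; ring,
      ← Real.rpow_add hN1, show (1:ℝ) + -(1-γ) = γ by ring]
  have hB : N0 * R ^ (-γ) = N0 ^ (1-γ) * N1 ^ γ := by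
    rw [hRdef, Real.div_rpow hN0.le hN1.le, div_eq_mul_inv, ← Real.rpow_neg hN1.le,
      neg_neg]
    rw [show N0 * (N0 ^ (-γ) * N1 ^ γ) =
      (N0 ^ (1:ℝ) * N0 ^ (-γ)) * N1 ^ γ by rw [Real.rpow_one]; ring,
      ← Real.rpow_add hN0, show (1:ℝ) + -γ = 1 - γ by ring]
  have hreal : N1 * (R ^ (1-γ) / (1-γ)) + 2 * (N0 * (R ^ (-γ) / γ)) =
      (1/(1-γ) + 2/γ) * (N0 ^ (1-γ) * N1 ^ γ) := by
    have e1 : N1 * (R ^ (1-γ) / (1-γ)) = N0 ^ (1-γ) * N1 ^ γ * (1/(1-γ)) := by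
      rw [← hA]; ring
    have e2 : 2 * (N0 * (R ^ (-γ) / γ)) = N0 ^ (1-γ) * N1 ^ γ * (2/γ) := by
      rw [← hB]; ring
    rw [e1, e2]; ring
  have final : S * (N1e * ENNReal.ofReal (R ^ (1-γ) / (1-γ)) +
      2 * N0e * ENNReal.ofReal (R ^ (-γ) / γ)) =
      ENNReal.ofReal ((S.toReal * (1/(1-γ) + 2/γ)) * N0 ^ (1-γ) * N1 ^ γ) := by
    have h2 : (2 : ℝ≥0∞) * N0e = ENNReal.ofReal (2 * N0) := by
      rw [ENNReal.ofReal_mul (by norm_num)]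
      norm_num
      rfl
    have h1γ : (0:ℝ) < 1 - γ := by linarith
    have w1 : 0 ≤ N1 * (R ^ (1-γ) / (1-γ)) :=
      mul_nonneg hN1.le (div_nonneg (Real.rpow_nonneg hR.le _) h1γ.le)
    have w2 : 0 ≤ 2 * N0 * (R ^ (-γ) / γ) :=
      mul_nonneg (by positivity) (div_nonneg (Real.rpow_nonneg hR.le _) hγ0.le)
    rw [h2, ← ENNReal.ofReal_mul hN1.le, ← ENNReal.ofReal_mul (by positivity : (0:ℝ) ≤ 2 * N0),
      ← ENNReal.ofReal_add w1 w2,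
      ← ENNReal.ofReal_toReal hSfin, ← ENNReal.ofReal_mul ENNReal.toReal_nonneg]
    congr 1
    rw [show 2 * N0 * (R ^ (-γ) / γ) = 2 * (N0 * (R ^ (-γ) / γ)) by ring, hreal,
      ENNReal.toReal_ofReal ENNReal.toReal_nonneg]
    ring
  calc ∫⁻ b : Ed d, ∫⁻ p : Ed d × Ed d,
        (‖(f p - f (p.1, p.2 - b)) / ‖b‖ ^ ((d:ℝ) + γ)‖₊ : ℝ≥0∞)
      ≤ S * ∫⁻ r in Ioi (0:ℝ), ENNReal.ofReal (r ^ (d - 1)) * h r := step2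
    _ ≤ S * (N1e * ENNReal.ofReal (R ^ (1-γ) / (1-γ)) +
        2 * N0e * ENNReal.ofReal (R ^ (-γ) / γ)) := mul_le_mul_right key3 _
    _ = ENNReal.ofReal ((S.toReal * (1/(1-γ) + 2/γ)) * N0 ^ (1-γ) * N1 ^ γ) := final

lemma mainV {d : ℕ} (hd : 1 ≤ d) {γ : ℝ} (hγ0 : 0 < γ) (hγ1 : γ < 1)
    {f : Ed d × Ed d → ℝ} (hf : ContDiff ℝ 1 f) (hfi : Integrable f)
    (hDi : Integrable (Dv f)) :
    Integrable (LamV d γ f) ∧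
      (∫ p, ‖LamV d γ f p‖) ≤
        (((volume : Measure (Ed d)).toSphere univ).toReal * (1/(1-γ) + 2/γ)) *
          (∫ p, ‖f p‖) ^ (1-γ) * (∫ p, ‖Dv f p‖) ^ γ := by
  by_cases hN1 : (∫ p, ‖Dv f p‖) = 0
  · -- the v-derivative vanishes identically
    have hDae : Dv f =ᵐ[volume] 0 := by
      have h := (integral_eq_zero_iff_of_nonneg (fun p => norm_nonneg (Dv f p)) hDi.norm).1 hN1
      filter_upwards [h] with p hp
      simpa using hp
    have hD0 : Dv f = 0 := (Continuous.ae_eq_iff_eq volume (continuous_Dv hf)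
      continuous_const).1 hDae
    have hconst : ∀ p1 v w : Ed d, f (p1, v) = f (p1, w) := by
      intro p1 v w
      refine is_const_of_fderiv_eq_zero (𝕜 := ℝ) (f := fun v => f (p1, v)) ?_ ?_ v w
      · intro x
        exact (hasFDerivAt_slice hf p1 x).differentiableAt
      · intro x
        have h1 : fderiv ℝ (fun v => f (p1, v)) x = Dv f (p1, x) :=
          (hasFDerivAt_slice hf p1 x).fderiv
        rw [h1, hD0]; rfl
    have hzero : LamV d γ f = fun _ => (0:ℝ) := by
      funext p
      unfold LamV
      have : ∀ b : Ed d, (f p - f (p.1, p.2 - b)) / ‖b‖ ^ ((d:ℝ) + γ) = 0 := by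
        intro b
        rw [show f p = f (p.1, p.2) from rfl, hconst p.1 p.2 (p.2 - b), sub_self, zero_div]
      simp only [this, integral_zero]
    constructor
    · rw [hzero]; exact integrable_zero _ _ _
    · rw [hzero, hN1, Real.zero_rpow hγ0.ne']
      simp
  by_cases hN0 : (∫ p, ‖f p‖) = 0
  · have hfae : f =ᵐ[volume] 0 := by
      have h := (integral_eq_zero_iff_of_nonneg (fun p => norm_nonneg (f p)) hfi.norm).1 hN0
      filter_upwards [h] with p hp
      simpa using hp
    have hf0 : f = 0 := (Continuous.ae_eq_iff_eq volume hf.continuous continuous_const).1 hfae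
    have hzero : LamV d γ f = fun _ => (0:ℝ) := by
      funext p
      unfold LamV
      simp [hf0]
    constructor
    · rw [hzero]; exact integrable_zero _ _ _
    · rw [hzero, hN0, Real.zero_rpow (by linarith : (1:ℝ) - γ ≠ 0)]
      simp
  -- main case
  have hN0' : 0 < ∫ p, ‖f p‖ :=
    (integral_nonneg fun p => norm_nonneg _).lt_of_ne' hN0
  have hN1' : 0 < ∫ p, ‖Dv f p‖ :=
    (integral_nonneg fun p => norm_nonneg _).lt_of_ne' hN1
  have hum : Measurable fun q : (Ed d × Ed d) × Ed d =>
      (f q.1 - f (q.1.1, q.1.2 - q.2)) / ‖q.2‖ ^ ((d:ℝ) + γ) := by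
    apply Measurable.div
    · apply Measurable.sub
      · exact hf.continuous.measurable.comp measurable_fst
      · refine hf.continuous.measurable.comp ?_
        exact (measurable_fst.comp measurable_fst).prodMk
          ((measurable_snd.comp measurable_fst).sub measurable_snd)
    · exact ((Real.continuous_rpow_const (by positivity)).comp
        continuous_snd.norm).measurable
  have humE : Measurable fun q : (Ed d × Ed d) × Ed d =>
      (‖(f q.1 - f (q.1.1, q.1.2 - q.2)) / ‖q.2‖ ^ ((d:ℝ) + γ)‖₊ : ℝ≥0∞) :=
    hum.nnnorm.coe_nnreal_ennreal
  have hswap : ∫⁻ p : Ed d × Ed d, ∫⁻ b : Ed d,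
        (‖(f p - f (p.1, p.2 - b)) / ‖b‖ ^ ((d:ℝ) + γ)‖₊ : ℝ≥0∞)
      = ∫⁻ b : Ed d, ∫⁻ p : Ed d × Ed d,
        (‖(f p - f (p.1, p.2 - b)) / ‖b‖ ^ ((d:ℝ) + γ)‖₊ : ℝ≥0∞) :=
    lintegral_lintegral_swap humE.aemeasurable
  have hfin : ∫⁻ p : Ed d × Ed d, ∫⁻ b : Ed d,
      (‖(f p - f (p.1, p.2 - b)) / ‖b‖ ^ ((d:ℝ) + γ)‖₊ : ℝ≥0∞) ≤
      ENNReal.ofReal ((((volume : Measure (Ed d)).toSphere univ).toReal * (1/(1-γ) + 2/γ)) *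
        (∫ p, ‖f p‖) ^ (1-γ) * (∫ p, ‖Dv f p‖) ^ γ) := by
    rw [hswap]
    exact coreV hd hγ0 hγ1 hf hfi hDi hN0' hN1'
  have hui : Integrable (fun q : (Ed d × Ed d) × Ed d =>
      (f q.1 - f (q.1.1, q.1.2 - q.2)) / ‖q.2‖ ^ ((d:ℝ) + γ))
      ((volume : Measure (Ed d × Ed d)).prod (volume : Measure (Ed d))) := by
    refine ⟨(hum.aestronglyMeasurable).mono_measure le_rfl, ?_⟩
    show (∫⁻ q, (‖(f q.1 - f (q.1.1, q.1.2 - q.2)) / ‖q.2‖ ^ ((d:ℝ) + γ)‖₊ : ℝ≥0∞)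
      ∂((volume : Measure (Ed d × Ed d)).prod volume)) < ⊤
    rw [lintegral_prod _ humE.aemeasurable]
    exact lt_of_le_of_lt hfin ENNReal.ofReal_lt_top
  have hLi : Integrable (LamV d γ f) := hui.integral_prod_left
  refine ⟨hLi, ?_⟩
  have hRnn : 0 ≤ (((volume : Measure (Ed d)).toSphere univ).toReal * (1/(1-γ) + 2/γ)) *
      (∫ p, ‖f p‖) ^ (1-γ) * (∫ p, ‖Dv f p‖) ^ γ := by
    have h1γ : (0:ℝ) < 1 - γ := by linarith
    have hc : (0:ℝ) ≤ 1/(1-γ) + 2/γ := by positivity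
    exact mul_nonneg (mul_nonneg (mul_nonneg ENNReal.toReal_nonneg hc)
      (Real.rpow_nonneg hN0'.le _)) (Real.rpow_nonneg hN1'.le _)
  calc ∫ p, ‖LamV d γ f p‖
      = (∫⁻ p, (‖LamV d γ f p‖₊ : ℝ≥0∞)).toReal := by
        rw [show (∫⁻ p, (‖LamV d γ f p‖₊ : ℝ≥0∞)) = ∫⁻ p, ‖LamV d γ f p‖ₑ from rfl, ← ofReal_integral_norm_eq_lintegral_enorm hLi,
          ENNReal.toReal_ofReal (integral_nonneg fun _ => norm_nonneg _)]
    _ ≤ (ENNReal.ofReal ((((volume : Measure (Ed d)).toSphere univ).toReal * (1/(1-γ) + 2/γ)) *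
        (∫ p, ‖f p‖) ^ (1-γ) * (∫ p, ‖Dv f p‖) ^ γ)).toReal := by
        apply ENNReal.toReal_mono ENNReal.ofReal_ne_top
        refine le_trans (lintegral_mono fun p => ?_) hfin
        exact enorm_integral_le_lintegral_enorm _
    _ = _ := ENNReal.toReal_ofReal hRnn

/-- `L^1` interpolation inequality for the fractional Laplacian:
`‖Λ_v^γ f‖_{L^1} ≤ C ‖f‖_{L^1}^{1−γ} ‖∇_v f‖_{L^1}^γ`, and the analogous
estimate in the `x` variable. -/
theorem lamV_L1_interpolation (d : ℕ) (hd : 1 ≤ d) (γ : ℝ) (hγ : γ ∈ Set.Ioo (0:ℝ) 1) :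
    ∃ C > 0, ∀ f : Ed d × Ed d → ℝ, ContDiff ℝ 1 f → Integrable f →
      ((Integrable fun p : Ed d × Ed d => fderiv ℝ (fun v => f (p.1, v)) p.2) →
        Integrable (LamV d γ f) ∧
        (∫ p : Ed d × Ed d, ‖LamV d γ f p‖) ≤
          C * (∫ p : Ed d × Ed d, ‖f p‖) ^ (1 - γ) *
            (∫ p : Ed d × Ed d, ‖fderiv ℝ (fun v => f (p.1, v)) p.2‖) ^ γ) ∧
      ((Integrable fun p : Ed d × Ed d => fderiv ℝ (fun x => f (x, p.2)) p.1) →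
        Integrable (LamX d γ f) ∧
        (∫ p : Ed d × Ed d, ‖LamX d γ f p‖) ≤
          C * (∫ p : Ed d × Ed d, ‖f p‖) ^ (1 - γ) *
            (∫ p : Ed d × Ed d, ‖fderiv ℝ (fun x => f (x, p.2)) p.1‖) ^ γ) := by
  obtain ⟨hγ0, hγ1⟩ := hγ
  haveI := Ed.nontrivial hd
  set S : ℝ≥0∞ := (volume : Measure (Ed d)).toSphere univ with hSdef
  have hS0 : S ≠ 0 := by
    rw [hSdef, Measure.toSphere_apply_univ]
    refine mul_ne_zero ?_ (measure_ball_pos _ _ one_pos).ne'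
    simp [finrank_euclideanSpace_fin]
    omega
  have hSfin : S ≠ ⊤ := measure_ne_top _ _
  have hC : 0 < S.toReal * (1/(1-γ) + 2/γ) := by
    have h1γ : (0:ℝ) < 1 - γ := by linarith
    have := ENNReal.toReal_pos hS0 hSfin
    positivity
  refine ⟨S.toReal * (1/(1-γ) + 2/γ), hC, fun f hf hfi => ?_⟩
  have hswp : MeasurePreserving (Prod.swap : Ed d × Ed d → Ed d × Ed d) volume volume := by
    rw [Measure.volume_eq_prod]
    exact Measure.measurePreserving_swap
  have hemb : MeasurableEmbedding (Prod.swap : Ed d × Ed d → Ed d × Ed d) :=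
    (MeasurableEquiv.prodComm : (Ed d × Ed d) ≃ᵐ (Ed d × Ed d)).measurableEmbedding
  constructor
  · intro hDvi
    have hDvi' : Integrable (Dv f) := hDvi
    exact mainV hd hγ0 hγ1 hf hfi hDvi'
  · intro hDxi
    set g : Ed d × Ed d → ℝ := fun p => f (p.2, p.1) with hgdef
    have hgc : ContDiff ℝ 1 g := hf.comp (contDiff_snd.prodMk contDiff_fst)
    have hgi : Integrable g :=
      (hswp.integrable_comp hf.continuous.aestronglyMeasurable).2 hfi
    have hDg : Integrable (Dv g) := by
      have h1 : Integrable ((Dv g) ∘ Prod.swap) := hDxi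
      exact (hswp.integrable_comp (continuous_Dv hgc).aestronglyMeasurable).1 h1
    obtain ⟨hint, hbound⟩ := mainV hd hγ0 hγ1 hgc hgi hDg
    have hLamX : LamX d γ f = (LamV d γ g) ∘ Prod.swap := rfl
    constructor
    · rw [hLamX]
      exact (hswp.integrable_comp hint.aestronglyMeasurable).2 hint
    · have e1 : ∫ p : Ed d × Ed d, ‖LamX d γ f p‖ = ∫ p, ‖LamV d γ g p‖ := by
        rw [hLamX]
        exact hswp.integral_comp hemb fun p => ‖LamV d γ g p‖
      have e2 : ∫ p : Ed d × Ed d, ‖f p‖ = ∫ p, ‖g p‖ := by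
        have : ∫ p : Ed d × Ed d, ‖g p‖ = ∫ p : Ed d × Ed d, ‖f p‖ := by
          have := hswp.integral_comp hemb fun p : Ed d × Ed d => ‖f p‖
          exact this
        exact this.symm
      have e3 : ∫ p : Ed d × Ed d, ‖fderiv ℝ (fun x => f (x, p.2)) p.1‖
          = ∫ p, ‖Dv g p‖ := by
        have := hswp.integral_comp hemb fun p : Ed d × Ed d => ‖Dv g p‖
        exact this
      rw [e1, e2, e3]
      exact hbound
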